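/- arXiv:2301.12987 — 4 statements merged into one kernel-verified Lean document; each statement's English description precedes it below -/
import Mathlib

section
/- Proposition 1 (sufficiency): Let α be a 𝔳-task and for h ∈ L_𝔳 define the generalisation probability p(h) = 2^{|Z_h \ Z_{S_α}|} / 2^{|L_𝔳 \ Z_{S_α}|} as a rational number. If h ∈ M_α maximises the weakness |Z_h| among all elements of M_α, then h maximises p among all elements of M_α. -/
/-- The set of statements (the implementable language) over vocabulary `𝔳`:
finite subsets of the vocabulary that are simultaneously satisfiable in some state. -/
def Lang {Φ : Type*} (𝔳 : Finset (Φ → Prop)) : Set (Finset (Φ → Prop)) :=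
  {l | l ⊆ 𝔳 ∧ ∃ φ : Φ, ∀ p ∈ l, p φ}

/-- The extension `Z_a` of a statement `a`. -/
def Extn {Φ : Type*} (𝔳 : Finset (Φ → Prop)) (a : Finset (Φ → Prop)) :
    Set (Finset (Φ → Prop)) :=
  {b ∈ Lang 𝔳 | a ⊆ b}

/-- The extension `Z_A` of a set of statements `A`. -/
def ExtnS {Φ : Type*} (𝔳 : Finset (Φ → Prop)) (A : Set (Finset (Φ → Prop))) :
    Set (Finset (Φ → Prop)) :=
  ⋃ a ∈ A, Extn 𝔳 a

/-- A `𝔳`-task: situations `S ⊆ L_𝔳` and decisions `D ⊆ Z_S`. -/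
structure VTask {Φ : Type*} (𝔳 : Finset (Φ → Prop)) where
  S : Set (Finset (Φ → Prop))
  D : Set (Finset (Φ → Prop))
  hS : S ⊆ Lang 𝔳
  hD : D ⊆ ExtnS 𝔳 S

/-- The models `M_α` of a task `α`. -/
def Models {Φ : Type*} (𝔳 : Finset (Φ → Prop)) (α : VTask 𝔳) :
    Set (Finset (Φ → Prop)) :=
  {l ∈ Lang 𝔳 | ExtnS 𝔳 α.S ∩ Extn 𝔳 l = α.D}

/-- The probability that a model `h` of `α` generalises to an unknown parent task:
`p(h) = 2^{|Z_h \ Z_{S_α}|} / 2^{|L_𝔳 \ Z_{S_α}|}`. -/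
noncomputable def genProb {Φ : Type*} (𝔳 : Finset (Φ → Prop)) (α : VTask 𝔳)
    (h : Finset (Φ → Prop)) : ℚ :=
  (2 : ℚ) ^ ((Extn 𝔳 h \ ExtnS 𝔳 α.S).ncard) / (2 : ℚ) ^ ((Lang 𝔳 \ ExtnS 𝔳 α.S).ncard)

/-- Proposition 1 (sufficiency): if h ∈ M_α maximises weakness |Z_h| among models of α,
then h maximises the generalisation probability p among models of α. -/
theorem weakness_maximisation_sufficient {Φ : Type*} [Nonempty Φ]
    (𝔳 : Finset (Φ → Prop)) (α : VTask 𝔳) (h : Finset (Φ → Prop))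
    (hm : h ∈ Models 𝔳 α)
    (hmax : ∀ m ∈ Models 𝔳 α, (Extn 𝔳 m).ncard ≤ (Extn 𝔳 h).ncard) :
    ∀ m ∈ Models 𝔳 α, genProb 𝔳 α m ≤ genProb 𝔳 α h := by
  have hLfin : (Lang 𝔳).Finite := by
    apply (𝔳.powerset : Finset (Finset (Φ → Prop))).finite_toSet.subset
    intro l hl
    simpa using hl.1
  have key : ∀ m ∈ Models 𝔳 α,
      (Extn 𝔳 m \ ExtnS 𝔳 α.S).ncard = (Extn 𝔳 m).ncard - α.D.ncard := by
    intro m hm'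
    have hfin : (Extn 𝔳 m).Finite := hLfin.subset (fun b hb => hb.1)
    have hinter : Extn 𝔳 m ∩ ExtnS 𝔳 α.S = α.D := by
      rw [Set.inter_comm]; exact hm'.2
    have := Set.ncard_inter_add_ncard_diff_eq_ncard (Extn 𝔳 m) (ExtnS 𝔳 α.S) hfin
    rw [hinter] at this
    omega
  intro m hm'
  have h1 := key m hm'
  have h2 := key h hm
  have hexp : (Extn 𝔳 m \ ExtnS 𝔳 α.S).ncard ≤ (Extn 𝔳 h \ ExtnS 𝔳 α.S).ncard := by
    rw [h1, h2]; exact Nat.sub_le_sub_right (hmax m hm') _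
  unfold genProb
  apply div_le_div_of_nonneg_right _ (by positivity)
  exact pow_le_pow_right₀ (by norm_num) hexp
end

section
/- Proposition 2 (necessity): Let α be a 𝔳-task and for h ∈ L_𝔳 define p(h) = 2^{|Z_h \ Z_{S_α}|} / 2^{|L_𝔳 \ Z_{S_α}|} as a rational number. If h ∈ M_α maximises p among all elements of M_α, then h maximises the weakness |Z_h| among all elements of M_α. -/
lemma lang_finite {Φ : Type*} (𝔳 : Finset (Φ → Prop)) : (Lang 𝔳).Finite := by
  apply Set.Finite.subset 𝔳.powerset.finite_toSet
  intro l hl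
  simpa using hl.1

lemma extn_finite {Φ : Type*} (𝔳 : Finset (Φ → Prop)) (a : Finset (Φ → Prop)) :
    (Extn 𝔳 a).Finite :=
  (lang_finite 𝔳).subset (fun _ hb => hb.1)

lemma card_split {Φ : Type*} (𝔳 : Finset (Φ → Prop)) (α : VTask 𝔳)
    (m : Finset (Φ → Prop)) (hm : m ∈ Models 𝔳 α) :
    (Extn 𝔳 m).ncard = (Extn 𝔳 m \ ExtnS 𝔳 α.S).ncard + α.D.ncard := by
  have hD : Extn 𝔳 m ∩ ExtnS 𝔳 α.S = α.D := by
    rw [Set.inter_comm]; exact hm.2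
  rw [← hD, ← Set.ncard_diff_add_ncard_of_subset Set.inter_subset_left (extn_finite 𝔳 m),
    Set.diff_self_inter]

/-- Proposition 2 (necessity): if h ∈ M_α maximises the generalisation probability p
among models of α, then h maximises weakness |Z_h| among models of α. -/
theorem weakness_maximisation_necessary {Φ : Type*} [Nonempty Φ]
    (𝔳 : Finset (Φ → Prop)) (α : VTask 𝔳) (h : Finset (Φ → Prop))
    (hm : h ∈ Models 𝔳 α)
    (hmax : ∀ m ∈ Models 𝔳 α, genProb 𝔳 α m ≤ genProb 𝔳 α h) :
    ∀ m ∈ Models 𝔳 α, (Extn 𝔳 m).ncard ≤ (Extn 𝔳 h).ncard := by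
  intro m hmm
  have hle := hmax m hmm
  unfold genProb at hle
  have hpos : (0:ℚ) < (2 : ℚ) ^ ((Lang 𝔳 \ ExtnS 𝔳 α.S).ncard) := by positivity
  rw [div_le_div_iff_of_pos_right hpos] at hle
  have hexp : (Extn 𝔳 m \ ExtnS 𝔳 α.S).ncard ≤ (Extn 𝔳 h \ ExtnS 𝔳 α.S).ncard := by
    exact_mod_cast (pow_le_pow_iff_right₀ one_lt_two).mp hle
  rw [card_split 𝔳 α m hmm, card_split 𝔳 α h hm]
  omega
end

section
/- For a 𝔳-task α and models h₁, h₂ ∈ M_α, the generalisation probabilities satisfy p(h₁) ≤ p(h₂) if and only if |Z_{h₁}| ≤ |Z_{h₂}|, where p(h) = 2^{|Z_h \ Z_{S_α}|} / 2^{|L_𝔳 \ Z_{S_α}|}. That is, the ordering of models by generalisation probability coincides exactly with their ordering by weakness. -/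
/-- For models h₁, h₂ of α, p(h₁) ≤ p(h₂) ↔ |Z_{h₁}| ≤ |Z_{h₂}|: the ordering of models
by generalisation probability coincides exactly with their ordering by weakness. -/
theorem genProb_le_iff_weakness_le {Φ : Type*} [Nonempty Φ]
    (𝔳 : Finset (Φ → Prop)) (α : VTask 𝔳) (h₁ h₂ : Finset (Φ → Prop))
    (hm₁ : h₁ ∈ Models 𝔳 α) (hm₂ : h₂ ∈ Models 𝔳 α) :
    genProb 𝔳 α h₁ ≤ genProb 𝔳 α h₂ ↔ (Extn 𝔳 h₁).ncard ≤ (Extn 𝔳 h₂).ncard := by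
  have hLfin : (Lang 𝔳).Finite :=
    Set.Finite.subset 𝔳.powerset.finite_toSet (fun l hl => Finset.mem_powerset.mpr hl.1)
  have hfin : ∀ h : Finset (Φ → Prop), (Extn 𝔳 h).Finite := fun h =>
    hLfin.subset (fun b hb => hb.1)
  -- split: |Z_h| = |Z_h \ Z_S| + |Z_h ∩ Z_S|
  have hsplit : ∀ h : Finset (Φ → Prop), h ∈ Models 𝔳 α →
      (Extn 𝔳 h).ncard = (Extn 𝔳 h \ ExtnS 𝔳 α.S).ncard + α.D.ncard := by
    intro h hm
    have hDeq : Extn 𝔳 h ∩ ExtnS 𝔳 α.S = α.D := by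
      rw [Set.inter_comm]; exact hm.2
    have := Set.ncard_inter_add_ncard_diff_eq_ncard (Extn 𝔳 h) (ExtnS 𝔳 α.S) (hfin h)
    rw [hDeq] at this
    omega
  have key : genProb 𝔳 α h₁ ≤ genProb 𝔳 α h₂ ↔
      (Extn 𝔳 h₁ \ ExtnS 𝔳 α.S).ncard ≤ (Extn 𝔳 h₂ \ ExtnS 𝔳 α.S).ncard := by
    unfold genProb
    rw [div_le_div_iff_of_pos_right (by positivity)]
    exact pow_le_pow_iff_right₀ (by norm_num)
  rw [key, hsplit h₁ hm₁, hsplit h₂ hm₂]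
  omega
end

section
/- Parent-construction lemma: Let α be a 𝔳-task, h ∈ M_α, and E a nonempty subset of Z_h \ Z_{S_α}. Then setting S_ω = S_α ∪ E and D_ω = Z_{S_ω} ∩ Z_h defines a 𝔳-task ω (i.e. D_ω ⊆ Z_{S_ω}) such that α is a child of ω (S_α ⊊ S_ω and D_α ⊆ D_ω) and h ∈ M_ω. Hence every model of α generalises to some proper parent task of α whenever Z_h \ Z_{S_α} is nonempty. -/
/-- Parent-construction lemma: for h ∈ M_α and a nonempty E ⊆ Z_h \ Z_{S_α},
setting S_ω = S_α ∪ E and D_ω = Z_{S_ω} ∩ Z_h yields a 𝔳-task ω of which α is a child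
(S_α ⊊ S_ω and D_α ⊆ D_ω) and such that h ∈ M_ω. -/
theorem model_generalises_to_proper_parent {Φ : Type*} [Nonempty Φ]
    (𝔳 : Finset (Φ → Prop)) (α : VTask 𝔳) (h : Finset (Φ → Prop))
    (hm : h ∈ Models 𝔳 α) (E : Set (Finset (Φ → Prop)))
    (hE : E ⊆ Extn 𝔳 h \ ExtnS 𝔳 α.S) (hEne : E.Nonempty) :
    ∃ ω : VTask 𝔳, ω.S = α.S ∪ E ∧ ω.D = ExtnS 𝔳 (α.S ∪ E) ∩ Extn 𝔳 h ∧
      α.S ⊂ ω.S ∧ α.D ⊆ ω.D ∧ h ∈ Models 𝔳 ω := by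
  have hElang : E ⊆ Lang 𝔳 := fun e he => (hE he).1.1
  have hSlang : α.S ∪ E ⊆ Lang 𝔳 := Set.union_subset α.hS hElang
  refine ⟨⟨α.S ∪ E, ExtnS 𝔳 (α.S ∪ E) ∩ Extn 𝔳 h, hSlang,
    Set.inter_subset_left⟩, rfl, rfl, ?_, ?_, ?_⟩
  · constructor
    · exact Set.subset_union_left
    · obtain ⟨e, heE⟩ := hEne
      intro hsub
      have heS : e ∈ α.S := hsub (Or.inr heE)
      exact (hE heE).2 (Set.mem_biUnion heS ⟨hElang heE, subset_rfl⟩)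
  · have hD : ExtnS 𝔳 α.S ∩ Extn 𝔳 h = α.D := hm.2
    rw [← hD]
    refine Set.inter_subset_inter_left _ ?_
    intro x hx
    simp only [ExtnS, Set.mem_iUnion] at hx ⊢
    obtain ⟨a, ha, hxa⟩ := hx
    exact ⟨a, Or.inl ha, hxa⟩
  · exact ⟨hm.1, rfl⟩
end
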